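/- arXiv:1207.2344 — 3 statements merged into one kernel-verified Lean document; each statement's English description precedes it below -/
import Mathlib

section
/- Let R be a commutative ring, A an associative (not necessarily commutative) R-algebra, m a natural number, u : Fin m → A a family of elements, and C = (c_{ij}) an m × m matrix over R that is alternating (i.e. c_{ij} = -c_{ji} for all i, j and c_{ii} = 0 for all i). Set χ = Σ_{i<j} c_{ij}(u_i u_j - u_j u_i) ∈ A. Then for every y ∈ A one has Σ_{i,j} c_{ij} ⁅u_j, ⁅u_i, y⁆⁆ = y·χ - χ·y, where ⁅a,b⁆ = a·b - b·a denotes the ring commutator and the double sum ranges over all pairs (i,j) in Fin m × Fin m. -/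
/-!
Antisymmetry of `C` turns `χ` into the full sum `ψ = ∑ i j, c_ij u_i u_j`. Expanding
`⁅u_j, ⁅u_i, y⁆⁆ = u_j u_i y - u_j y u_i - u_i y u_j + y u_i u_j`, the first terms sum to
`-ψ y`, the last ones to `y ψ`, and the two middle families cancel, being exchanged by the swap
`i ↔ j`, which changes the sign of `c_ij`.
-/

open Finset

section SkewSums

variable {R M ι : Type*} [Ring R] [AddCommGroup M] [Module R M] [Fintype ι]
  {C : Matrix ι ι R}

theorem sum_sum_smul_swap_of_antisymm (hC : ∀ i j, C i j = -C j i) (f : ι → ι → M) :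
    ∑ i, ∑ j, C i j • f j i = -∑ i, ∑ j, C i j • f i j := by
  rw [sum_comm, ← sum_neg_distrib]
  refine sum_congr rfl fun i _ => ?_
  rw [← sum_neg_distrib]
  exact sum_congr rfl fun j _ => by rw [hC, neg_smul]

theorem sum_sum_Ioi_smul_sub_of_antisymm [LinearOrder ι] [LocallyFiniteOrderTop ι]
    [LocallyFiniteOrderBot ι] (hC : ∀ i j, C i j = -C j i) (hdiag : ∀ i, C i i = 0)
    (g : ι → ι → M) :
    ∑ i, ∑ j ∈ Ioi i, C i j • (g i j - g j i) = ∑ i, ∑ j, C i j • g i j := by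
  have hoff : ∀ i, ∑ j, C i j • g i j = ∑ j ∈ {i}ᶜ, C i j • g i j := fun i => by
    rw [← sum_compl_add_sum {i}, sum_singleton, hdiag, zero_smul, add_zero]
  simp_rw [hoff, ← sum_sum_Ioi_add_eq_sum_sum_off_diag]
  refine sum_congr rfl fun i _ => sum_congr rfl fun j _ => ?_
  rw [hC j i, smul_sub, neg_smul, sub_eq_add_neg, add_comm]

end SkewSums

theorem sum_sum_smul_lie_lie_of_antisymm {R A ι : Type*} [Ring R] [Ring A] [Module R A]
    [IsScalarTower R A A] [SMulCommClass R A A] [Fintype ι]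
    {C : Matrix ι ι R} (hC : ∀ i j, C i j = -C j i) (u : ι → A) (y : A) :
    ∑ i, ∑ j, C i j • ⁅u j, ⁅u i, y⁆⁆ = ⁅y, ∑ i, ∑ j, C i j • (u i * u j)⁆ := by
  have hexpand : ∀ i j,
      ⁅u j, ⁅u i, y⁆⁆ = u j * u i * y - (u j * y * u i + u i * y * u j) + y * u i * u j := by
    intro i j
    simp only [Ring.lie_def]
    noncomm_ring
  have hleft : ∑ i, ∑ j, C i j • (u j * u i * y) = -((∑ i, ∑ j, C i j • (u i * u j)) * y) := by
    rw [sum_sum_smul_swap_of_antisymm hC, neg_inj, sum_mul]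
    simp_rw [sum_mul, smul_mul_assoc]
  have hmiddle : ∑ i, ∑ j, C i j • (u j * y * u i + u i * y * u j) = 0 := by
    simp_rw [smul_add, sum_add_distrib]
    rw [sum_sum_smul_swap_of_antisymm hC (fun i j => u i * y * u j), neg_add_cancel]
  have hright : ∑ i, ∑ j, C i j • (y * u i * u j) = y * ∑ i, ∑ j, C i j • (u i * u j) := by
    simp_rw [mul_sum, mul_smul_comm, mul_assoc]
  simp_rw [hexpand, smul_add, smul_sub, sum_add_distrib, sum_sub_distrib, hleft, hmiddle, hright,
    Ring.lie_def]
  abel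

/-- The Jacobi-identity computation (skew-symmetric / `n` odd case): for an alternating
matrix `C` over `R` and elements `u i` of an associative `R`-algebra `A`, with
`χ = ∑_{i<j} c_{ij}(u_i u_j - u_j u_i)`, the double sum `∑_{i,j} c_{ij} ⁅u_j, ⁅u_i, y⁆⁆`
is the commutator `y * χ - χ * y`. -/
theorem stmt0 (R : Type*) [CommRing R] (A : Type*) [Ring A] [Algebra R A]
    (m : ℕ) (u : Fin m → A) (C : Matrix (Fin m) (Fin m) R)
    (hAlt : ∀ i j, C i j = - C j i) (hDiag : ∀ i, C i i = 0)
    (χ : A)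
    (hχ : χ = ∑ i : Fin m, ∑ j ∈ Finset.Ioi i, C i j • (u i * u j - u j * u i))
    (y : A) :
    ∑ i : Fin m, ∑ j : Fin m, C i j • ⁅u j, ⁅u i, y⁆⁆ = y * χ - χ * y := by
  rw [hχ, sum_sum_Ioi_smul_sub_of_antisymm hAlt hDiag (fun i j => u i * u j),
    sum_sum_smul_lie_lie_of_antisymm hAlt, Ring.lie_def]
end

section
/- Let R be a commutative ring, A an associative (not necessarily commutative) R-algebra, m a natural number, u : Fin m → A a family of elements, and C = (c_{ij}) a symmetric m × m matrix over R (c_{ij} = c_{ji}). Let s ∈ R satisfy s² = 1. Set χ = Σ_{i<j} c_{ij}(u_i u_j + u_j u_i) + Σ_i c_{ii} u_i² ∈ A. Then for every y ∈ A, writing z_i = u_i y - s·y u_i, one has Σ_{i,j} c_{ij}(u_j z_i + s·z_i u_j) = χ·y - y·χ, where the double sum ranges over all pairs (i,j) in Fin m × Fin m. -/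
/-!
Expanding `z i` turns each summand into
`c_ij (u_j u_i y - y u_i u_j) + s c_ij (u_i y u_j - u_j y u_i)` (the term `s² y u_i u_j` collapses
because `s² = 1`). Since `C` is symmetric, swapping `i` and `j`
shows that the cross terms `s c_ij u_i y u_j` cancel and that `∑ c_ij u_j u_i = ∑ c_ij u_i u_j`,
and the latter full double sum is `χ` once the off-diagonal pairs are grouped as `i < j`.
-/

open Finset

theorem Finset.sum_sum_eq_sum_sum_Ioi_add_sum_diag {ι M : Type*} [LinearOrder ι] [Fintype ι]
    [LocallyFiniteOrderTop ι] [LocallyFiniteOrderBot ι] [AddCommMonoid M] (f : ι → ι → M) :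
    ∑ i, ∑ j, f i j = (∑ i, ∑ j ∈ Ioi i, (f i j + f j i)) + ∑ i, f i i := by
  classical
  rw [sum_sum_Ioi_add_eq_sum_sum_off_diag (fun a b => f b a), ← sum_add_distrib]
  exact sum_congr rfl fun i _ => by rw [Fintype.sum_eq_add_sum_compl i, add_comm]

theorem Finset.sum_sum_smul_swap_of_symm {ι R M : Type*} [Fintype ι] [SMul R M]
    [AddCommMonoid M] {C : ι → ι → R} (hC : ∀ i j, C i j = C j i) (f : ι → ι → M) :
    ∑ i, ∑ j, C i j • f j i = ∑ i, ∑ j, C i j • f i j := by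
  rw [sum_comm]
  exact sum_congr rfl fun i _ => sum_congr rfl fun j _ => by rw [hC]

theorem Finset.sum_sum_smul_mul_eq_sum_Ioi_add_sum_diag {ι R A : Type*} [LinearOrder ι]
    [Fintype ι] [LocallyFiniteOrderTop ι] [LocallyFiniteOrderBot ι] [Mul A] [AddCommMonoid A]
    [DistribSMul R A] {C : ι → ι → R} (hC : ∀ i j, C i j = C j i) (u : ι → A) :
    ∑ i, ∑ j, C i j • (u i * u j) =
      (∑ i, ∑ j ∈ Ioi i, C i j • (u i * u j + u j * u i)) + ∑ i, C i i • (u i * u i) := by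
  rw [sum_sum_eq_sum_sum_Ioi_add_sum_diag]
  simp_rw [smul_add, hC _ _]

theorem smul_graded_bracket_graded_bracket {R A : Type*} [CommRing R] [Ring A] [Algebra R A]
    {s : R} (hs : s ^ 2 = 1) (c : R) (a b y : A) :
    c • (b * (a * y - s • (y * a)) + s • ((a * y - s • (y * a)) * b)) =
      (c • (b * a)) * y - y * (c • (a * b)) + s • (c • (a * y * b) - c • (b * y * a)) := by
  simp only [mul_sub, sub_mul, smul_sub, smul_add, mul_smul_comm, smul_mul_assoc, smul_smul,
    mul_assoc, ← sq, hs, one_smul, mul_comm c s]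
  abel

/-- The graded Jacobi-identity computation (symmetric / `n` even case): for a symmetric
matrix `C`, a sign `s` with `s² = 1`, elements `u i` of an associative `R`-algebra `A`,
`χ = ∑_{i<j} c_{ij}(u_i u_j + u_j u_i) + ∑_i c_{ii} u_i²`, and `z_i = u_i y - s • (y u_i)`,
one has `∑_{i,j} c_{ij}(u_j z_i + s • (z_i u_j)) = χ y - y χ`. -/
theorem stmt2 (R : Type*) [CommRing R] (A : Type*) [Ring A] [Algebra R A]
    (m : ℕ) (u : Fin m → A) (C : Matrix (Fin m) (Fin m) R)
    (hSymm : ∀ i j, C i j = C j i)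
    (s : R) (hs : s ^ 2 = 1)
    (χ : A)
    (hχ : χ = (∑ i : Fin m, ∑ j ∈ Finset.Ioi i, C i j • (u i * u j + u j * u i)) +
      ∑ i : Fin m, C i i • (u i * u i))
    (y : A) (z : Fin m → A) (hz : ∀ i, z i = u i * y - s • (y * u i)) :
    ∑ i : Fin m, ∑ j : Fin m, C i j • (u j * z i + s • (z i * u j)) =
      χ * y - y * χ := by
  rw [← sum_sum_smul_mul_eq_sum_Ioi_add_sum_diag hSymm] at hχ
  calc ∑ i, ∑ j, C i j • (u j * z i + s • (z i * u j))
      = ∑ i, ∑ j, ((C i j • (u j * u i)) * y - y * (C i j • (u i * u j)) +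
          s • (C i j • (u i * y * u j) - C i j • (u j * y * u i))) := by
        simp only [hz, smul_graded_bracket_graded_bracket hs]
    _ = (∑ i, ∑ j, C i j • (u j * u i)) * y - y * (∑ i, ∑ j, C i j • (u i * u j)) +
          s • ((∑ i, ∑ j, C i j • (u i * y * u j)) - ∑ i, ∑ j, C i j • (u j * y * u i)) := by
        simp only [sum_add_distrib, sum_sub_distrib, sum_mul, mul_sum, smul_sum, smul_sub]
    _ = χ * y - y * χ := by
        rw [sum_sum_smul_swap_of_symm hSymm (fun i j => u i * y * u j),
          sum_sum_smul_swap_of_symm hSymm (fun i j => u i * u j), sub_self, smul_zero, add_zero,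
          hχ]
end

section
/- Let R be a commutative ring, m a natural number, u_i = ι(i) ∈ FreeAlgebra R (Fin m) the generators of the free (tensor) algebra on m generators, C = (c_{ij}) a symmetric m × m matrix over R, and s ∈ R with s² = 1. Set χ = Σ_{i<j} c_{ij}(u_i u_j + u_j u_i) + Σ_i c_{ii} u_i². Then for every y ∈ FreeAlgebra R (Fin m), writing z_i = u_i y - s·y u_i, the element Σ_{i,j} c_{ij}(u_j z_i + s·z_i u_j) lies in the two-sided ideal of FreeAlgebra R (Fin m) generated by χ; equivalently its image in the quotient algebra U = FreeAlgebra R (Fin m)/(χ) is zero. -/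
/-!
By the symmetry of `C`, `χ = ∑_{i,j} c_{ij} u_i u_j`. Expanding `z_i` and using `s² = 1`, the
element in question becomes
`∑ c_{ij} (u_j u_i y - y u_i u_j) + s ∑ c_{ij} (u_i y u_j - u_j y u_i)`.
Again by symmetry of `C` the second sum vanishes and the first is the commutator `χ y - y χ`,
which lies in `(χ)`.
-/

open Finset

lemma Finset.sum_sum_Ioi_add_add_sum_diag_eq_sum_sum {α M : Type*} [LinearOrder α] [Fintype α]
    [LocallyFiniteOrderTop α] [LocallyFiniteOrderBot α] [AddCommMonoid M] (f : α → α → M) :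
    ∑ i, ∑ j ∈ Ioi i, (f j i + f i j) + ∑ i, f i i = ∑ i, ∑ j, f j i := by
  rw [sum_sum_Ioi_add_eq_sum_sum_off_diag, ← sum_add_distrib]
  exact sum_congr rfl fun i _ => by rw [Fintype.sum_eq_add_sum_compl i, add_comm]

section SymmetricMatrix

variable {ι R M : Type*} [Fintype ι] [CommRing R] [AddCommMonoid M] [Module R M]
  {C : Matrix ι ι R}

lemma Matrix.sum_sum_smul_swap (hC : ∀ i j, C i j = C j i) (f : ι → ι → M) :
    ∑ i, ∑ j, C i j • f j i = ∑ i, ∑ j, C i j • f i j := by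
  rw [sum_comm]
  exact sum_congr rfl fun i _ => sum_congr rfl fun j _ => by rw [hC]

variable {A : Type*} [Ring A] [Algebra R A]

lemma Matrix.sum_sum_Ioi_smul_anticomm_add_sum_diag [LinearOrder ι] [LocallyFiniteOrderTop ι]
    [LocallyFiniteOrderBot ι] (hC : ∀ i j, C i j = C j i) (u : ι → A) :
    ∑ i, ∑ j ∈ Ioi i, C i j • (u i * u j + u j * u i) + ∑ i, C i i • (u i * u i) =
      ∑ i, ∑ j, C i j • (u i * u j) := by
  have hpair : ∀ i j,
      C i j • (u i * u j + u j * u i) = C j i • (u j * u i) + C i j • (u i * u j) :=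
    fun i j => by rw [smul_add, add_comm, hC j i]
  simp_rw [hpair]
  rw [sum_sum_Ioi_add_add_sum_diag_eq_sum_sum (fun i j => C i j • (u i * u j)), sum_comm]

lemma Matrix.sum_sum_smul_twistedCommutator_eq_commutator (hC : ∀ i j, C i j = C j i) {s : R}
    (hs : s ^ 2 = 1) (u : ι → A) (y : A) :
    ∑ i, ∑ j, C i j • (u j * (u i * y - s • (y * u i)) + s • ((u i * y - s • (y * u i)) * u j)) =
      (∑ i, ∑ j, C i j • (u i * u j)) * y - y * ∑ i, ∑ j, C i j • (u i * u j) := by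
  have hexpand : ∀ i j,
      C i j • (u j * (u i * y - s • (y * u i)) + s • ((u i * y - s • (y * u i)) * u j)) =
        (C i j • (u j * u i) * y - y * C i j • (u i * u j)) +
          s • (C i j • (u i * y * u j) - C i j • (u j * y * u i)) := by
    intro i j
    have hss : (s * s) • (y * (u i * u j)) = y * (u i * u j) := by rw [← sq, hs, one_smul]
    simp only [mul_sub, sub_mul, smul_sub, mul_smul_comm, smul_mul_assoc, smul_smul, smul_add,
      mul_assoc, hss, mul_comm s]
    abel
  simp_rw [hexpand, sum_add_distrib, sum_sub_distrib, ← smul_sum, sum_sub_distrib, ← sum_mul,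
    ← mul_sum, sum_sum_smul_swap hC (fun i j => u i * y * u j), sub_self, smul_zero, add_zero,
    sum_sum_smul_swap hC (fun i j => u i * u j)]

end SymmetricMatrix

lemma TwoSidedIdeal.mul_sub_mul_mem_span_singleton {A : Type*} [NonUnitalNonAssocRing A]
    (x y : A) : x * y - y * x ∈ TwoSidedIdeal.span {x} :=
  have hx : x ∈ TwoSidedIdeal.span {x} := subset_span rfl
  _root_.sub_mem (mul_mem_right _ _ _ hx) (mul_mem_left _ _ _ hx)

theorem stmt3_general (R : Type*) [CommRing R] (m : ℕ)
    (C : Matrix (Fin m) (Fin m) R) (hSymm : ∀ i j, C i j = C j i)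
    (s : R) (hs : s ^ 2 = 1)
    (u : Fin m → FreeAlgebra R (Fin m))
    (χ : FreeAlgebra R (Fin m))
    (hχ : χ = (∑ i : Fin m, ∑ j ∈ Finset.Ioi i, C i j • (u i * u j + u j * u i)) +
      ∑ i : Fin m, C i i • (u i * u i))
    (y : FreeAlgebra R (Fin m)) (z : Fin m → FreeAlgebra R (Fin m))
    (hz : ∀ i, z i = u i * y - s • (y * u i)) :
    (∑ i : Fin m, ∑ j : Fin m, C i j • (u j * z i + s • (z i * u j))) ∈
      TwoSidedIdeal.span {χ} := by
  rw [Matrix.sum_sum_Ioi_smul_anticomm_add_sum_diag hSymm] at hχ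
  simp_rw [hz, Matrix.sum_sum_smul_twistedCommutator_eq_commutator hSymm hs, ← hχ]
  exact TwoSidedIdeal.mul_sub_mul_mem_span_singleton χ y

/-- In the free tensor algebra `T(V) = FreeAlgebra R (Fin m)`, with `C` symmetric,
`s² = 1`, `χ = ∑_{i<j} c_{ij}(u_i u_j + u_j u_i) + ∑_i c_{ii} u_i²`, and
`z_i = u_i y - s • (y u_i)`, the element `∑_{i,j} c_{ij}(u_j z_i + s • (z_i u_j))`
lies in the two-sided ideal generated by `χ` (equivalently its image in
`U = T(V)/(χ)` is zero). -/
theorem stmt3 (R : Type*) [CommRing R] (m : ℕ)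
    (C : Matrix (Fin m) (Fin m) R) (hSymm : ∀ i j, C i j = C j i)
    (s : R) (hs : s ^ 2 = 1)
    (u : Fin m → FreeAlgebra R (Fin m)) (hu : ∀ i, u i = FreeAlgebra.ι R i)
    (χ : FreeAlgebra R (Fin m))
    (hχ : χ = (∑ i : Fin m, ∑ j ∈ Finset.Ioi i, C i j • (u i * u j + u j * u i)) +
      ∑ i : Fin m, C i i • (u i * u i))
    (y : FreeAlgebra R (Fin m)) (z : Fin m → FreeAlgebra R (Fin m))
    (hz : ∀ i, z i = u i * y - s • (y * u i)) :
    (∑ i : Fin m, ∑ j : Fin m, C i j • (u j * z i + s • (z i * u j))) ∈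
      TwoSidedIdeal.span {χ} :=
  stmt3_general R m C hSymm s hs u χ hχ y z hz
end
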